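/- Let γ ≥ 2, and for the ensemble of Example 2 define the Hermitian operator H̃ = (1/4)K₀ + (1/4)K₁ with K₀, K₁ as above. Then for each ω ∈ {0,1}×{+,−}, the operator H̃ − (1/4)ρ̃ω is a sum of a positive semidefinite operator and the partial transpose of a positive semidefinite operator; consequently Tr((H̃ − (1/4)ρ̃ω)B) ≥ 0 for every separable positive semidefinite operator B, and 2Tr H̃ = (1/2)(1 + √(1+γ+γ²)/(1+γ)). -/

import Mathlib

open Matrix ComplexOrder
open scoped Kronecker

noncomputable section

abbrev M2 : Type := Matrix (Fin 2) (Fin 2) ℂ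
abbrev M4 : Type := Matrix (Fin 2 × Fin 2) (Fin 2 × Fin 2) ℂ

/-- standard basis kets of ℂ² -/
def ket0 : Fin 2 → ℂ := ![1, 0]
def ket1 : Fin 2 → ℂ := ![0, 1]
/-- |+⟩ = (|0⟩+|1⟩)/√2 -/
def ketP : Fin 2 → ℂ := ![(((Real.sqrt 2)⁻¹ : ℝ) : ℂ), (((Real.sqrt 2)⁻¹ : ℝ) : ℂ)]
/-- |−⟩ = (|0⟩−|1⟩)/√2 -/
def ketM : Fin 2 → ℂ := ![(((Real.sqrt 2)⁻¹ : ℝ) : ℂ), -(((Real.sqrt 2)⁻¹ : ℝ) : ℂ)]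

/-- outer product |v⟩⟨w| -/
def outer {n : Type*} (v w : n → ℂ) : Matrix n n ℂ := Matrix.of fun i j => v i * star (w j)
/-- projector |v⟩⟨v| -/
def proj {n : Type*} (v : n → ℂ) : Matrix n n ℂ := outer v v

/-- tensor product of two qubit vectors -/
def kron2 (v w : Fin 2 → ℂ) : Fin 2 × Fin 2 → ℂ := fun p => v p.1 * w p.2

/-- partial transpose on the second tensor factor, in the standard basis -/
def PT (A : M4) : M4 := Matrix.of fun p q => A (p.1, q.2) (q.1, p.2)

/-- separability: a sum of tensor products of positive semidefinite operators -/
def Separable (E : M4) : Prop :=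
  ∃ (k : ℕ) (X Y : Fin k → M2),
    (∀ i, (X i).PosSemidef ∧ (Y i).PosSemidef) ∧ E = ∑ i, (X i) ⊗ₖ (Y i)

def σ0 : M2 := 1
def σ1 : M2 := !![0, 1; 1, 0]
def σ2 : M2 := !![0, -Complex.I; Complex.I, 0]

/-- Example 2 states (ρ₀, ρ₁, ρ₊ as in Example 1; ρ₋ = |+⟩⟨+|⊗|−⟩⟨−|) -/
def ρ00' : M4 := proj ket0 ⊗ₖ proj ket0
def ρ01' : M4 := proj ket0 ⊗ₖ proj ket1
def ρPP' : M4 := proj ketP ⊗ₖ proj ketP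
def ρPM' : M4 := proj ketP ⊗ₖ proj ketM

/-- average states ρ̃₍b,±₎ = (γ/(1+γ))|0⟩⟨0|⊗|b⟩⟨b| + (1/(1+γ))|+⟩⟨+|⊗|±⟩⟨±| -/
def rt0p (γ : ℝ) : M4 :=
  ((γ / (1 + γ) : ℝ) : ℂ) • (proj ket0 ⊗ₖ proj ket0)
    + ((1 / (1 + γ) : ℝ) : ℂ) • (proj ketP ⊗ₖ proj ketP)
def rt0m (γ : ℝ) : M4 :=
  ((γ / (1 + γ) : ℝ) : ℂ) • (proj ket0 ⊗ₖ proj ket0)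
    + ((1 / (1 + γ) : ℝ) : ℂ) • (proj ketP ⊗ₖ proj ketM)
def rt1p (γ : ℝ) : M4 :=
  ((γ / (1 + γ) : ℝ) : ℂ) • (proj ket0 ⊗ₖ proj ket1)
    + ((1 / (1 + γ) : ℝ) : ℂ) • (proj ketP ⊗ₖ proj ketP)
def rt1m (γ : ℝ) : M4 :=
  ((γ / (1 + γ) : ℝ) : ℂ) • (proj ket0 ⊗ₖ proj ket1)
    + ((1 / (1 + γ) : ℝ) : ℂ) • (proj ketP ⊗ₖ proj ketM)

/-- `IsSpectralPair A P N` : P and N are the orthogonal projections onto the positive and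
negative eigenspaces of the Hermitian operator A (whose eigenvalues are all nonzero, so
that P + N = 1). -/
def IsSpectralPair (A P N : M4) : Prop :=
  P.IsHermitian ∧ N.IsHermitian ∧ P * P = P ∧ N * N = N ∧ P + N = 1
    ∧ P * A = A * P ∧ (A * P).PosSemidef ∧ ((-A) * N).PosSemidef
    ∧ ∀ v : Fin 2 × Fin 2 → ℂ, A *ᵥ v = 0 → P *ᵥ v = 0

/-!
For each pair `(ρ̃, ρ̃')` entering `K₀` or `K₁`, let `A = ρ̃ - ρ̃'` with spectral projections
`P, N`. Then `A * (P - N) = |A|`, so `K = ½ρ̃P + ½ρ̃'N = ¼(ρ̃ + ρ̃') + ¼|A|`, while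
`K - ½ρ̃ = ½(-A)N` and `K - ½ρ̃' = ½AP` are positive (the Holevo conditions).

Both differences are of the form `A = α |0⟩⟨0| ⊗ Z + β |+⟩⟨+| ⊗ X`, whose square `B` satisfies
`B² = (α² + β²) B - (αβ/2)²`; hence `|A| = √B` is an explicit affine function of `B`, of trace
`2√(α² + β² + |αβ|) = 2√(1 + γ + γ²)/(1 + γ)`. The partial transpose sends `B(α, β)` to
`B(-α, β)` and fixes every `ρ̃ω`, so it exchanges `K₀` and `K₁`.

Thus `H̃ = ¼K + ¼ PT K` for both `K = K₀, K₁`; choosing `K` with `X = ¼(K - ½ρ̃ω) ⪰ 0` gives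
`H̃ - ¼ρ̃ω = X + PT X`, and for separable `B` (so that `PT B ⪰ 0` too)
`Tr((X + PT X) B) = Tr(X B) + Tr(X PT B) ≥ 0`.
-/

lemma Matrix.PosSemidef.trace_mul_nonneg {n : Type*} [Fintype n] [DecidableEq n]
    {A B : Matrix n n ℂ} (hA : A.PosSemidef) (hB : B.PosSemidef) : 0 ≤ (A * B).trace := by
  open scoped MatrixOrder in
  obtain ⟨C, rfl⟩ := CStarAlgebra.nonneg_iff_eq_star_mul_self.mp hA.nonneg
  rw [star_eq_conjTranspose, Matrix.mul_assoc, Matrix.trace_mul_comm]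
  exact (hB.mul_mul_conjTranspose_same C).trace_nonneg

@[simp] lemma transpose_fin_two {α : Type*} (a b c d : α) : !![a, b; c, d]ᵀ = !![a, c; b, d] := by
  ext i j; fin_cases i <;> fin_cases j <;> rfl

section SqrtOfQuadratic

variable {n : Type*} [DecidableEq n]

/-- If `B * B = c • B - t ^ 2 • 1`, each eigenvalue `λ` of `B` satisfies `(λ + t)² = (c + 2t) λ`,
so `√λ = (λ + t) / √(c + 2t)` and `√B` is this affine function of `B`. -/
def sqrtOfQuadratic (c t : ℝ) (B : Matrix n n ℂ) : Matrix n n ℂ :=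
  ((√(c + 2 * t) : ℂ)⁻¹) • (B + (t : ℂ) • 1)

lemma posSemidef_sqrtOfQuadratic {B : Matrix n n ℂ} (hB : B.PosSemidef) (c : ℝ) {t : ℝ}
    (ht : 0 ≤ t) : (sqrtOfQuadratic c t B).PosSemidef := by
  refine (hB.add (PosSemidef.one.smul ?_)).smul ?_
  · exact_mod_cast ht
  · rw [← Complex.ofReal_inv]
    exact_mod_cast inv_nonneg.mpr (Real.sqrt_nonneg _)

lemma sqrtOfQuadratic_mul_self [Fintype n] {B : Matrix n n ℂ} {c t : ℝ} (hct : 0 < c + 2 * t)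
    (hBB : B * B = (c : ℂ) • B - ((t : ℂ) ^ 2) • 1) :
    sqrtOfQuadratic c t B * sqrtOfQuadratic c t B = B := by
  have hs : ((√(c + 2 * t) : ℂ)⁻¹) * (√(c + 2 * t) : ℂ)⁻¹ * (c + 2 * t) = 1 := by
    rw [← mul_inv, ← Complex.ofReal_mul, Real.mul_self_sqrt hct.le]
    have : (c + 2 * t : ℂ) ≠ 0 := by exact_mod_cast hct.ne'
    push_cast
    field_simp
  have hsq : (B + (t : ℂ) • 1) * (B + (t : ℂ) • 1) = ((c + 2 * t : ℝ) : ℂ) • B := by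
    simp only [add_mul, mul_add, smul_mul_smul_comm, Matrix.mul_one, Matrix.one_mul,
      Matrix.mul_smul, Matrix.smul_mul, hBB]
    push_cast
    module
  rw [sqrtOfQuadratic, smul_mul_smul_comm, hsq, smul_smul]
  push_cast
  rw [hs, one_smul]

lemma trace_sqrtOfQuadratic [Fintype n] (c t : ℝ) (B : Matrix n n ℂ) :
    (sqrtOfQuadratic c t B).trace = ((√(c + 2 * t) : ℂ)⁻¹) * (B.trace + t * Fintype.card n) := by
  rw [sqrtOfQuadratic, trace_smul, trace_add, trace_smul, trace_one, smul_eq_mul, smul_eq_mul]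

end SqrtOfQuadratic

namespace IsSpectralPair

variable {A P N : M4} (h : IsSpectralPair A P N)
include h

lemma eq_one_sub : N = 1 - P := by
  obtain ⟨-, -, -, -, hPN, -⟩ := h
  exact eq_sub_of_add_eq' hPN

lemma sub_mul_self : (P - N) * (P - N) = 1 := by
  rw [h.eq_one_sub]
  obtain ⟨-, -, hPP, -⟩ := h
  simp only [Matrix.sub_mul, Matrix.mul_sub, Matrix.one_mul, Matrix.mul_one, hPP]
  abel

lemma posSemidef_mul_sub : (A * (P - N)).PosSemidef := by
  obtain ⟨-, -, -, -, -, -, hpos, hneg, -⟩ := h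
  convert hpos.add hneg using 1
  simp only [sub_eq_add_neg, Matrix.mul_add, Matrix.mul_neg, Matrix.neg_mul]

lemma mul_sub_eq {T : M4} (hT : T.PosSemidef) (hTT : T * T = A * A) : A * (P - N) = T := by
  open scoped MatrixOrder Matrix.Norms.L2Operator in
  have hcomm : (P - N) * A = A * (P - N) := by
    rw [h.eq_one_sub]
    obtain ⟨-, -, -, -, -, hPA, -⟩ := h
    simp only [Matrix.sub_mul, Matrix.mul_sub, Matrix.one_mul, Matrix.mul_one, hPA]
  refine (CFC.mul_self_eq_mul_self_iff _ _ h.posSemidef_mul_sub.nonneg hT.nonneg).mp ?_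
  calc A * (P - N) * (A * (P - N)) = A * ((P - N) * A) * (P - N) := by noncomm_ring
    _ = A * A * ((P - N) * (P - N)) := by rw [hcomm]; noncomm_ring
    _ = T * T := by rw [h.sub_mul_self, Matrix.mul_one, hTT]

end IsSpectralPair

def holevoK (ρ σ P N : M4) : M4 := (1/2 : ℂ) • (ρ * P) + (1/2 : ℂ) • (σ * N)

namespace IsSpectralPair

variable {ρ σ P N : M4} (h : IsSpectralPair (ρ - σ) P N)
include h

lemma posSemidef_holevoK_sub_left : (holevoK ρ σ P N - (1/2 : ℂ) • ρ).PosSemidef := by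
  have heq : holevoK ρ σ P N - (1/2 : ℂ) • ρ = (1/2 : ℂ) • (-(ρ - σ) * N) := by
    rw [holevoK, h.eq_one_sub]
    simp only [Matrix.mul_sub, Matrix.neg_mul, Matrix.sub_mul, Matrix.mul_one]
    module
  obtain ⟨-, -, -, -, -, -, -, hneg, -⟩ := h
  rw [heq]
  exact hneg.smul (by norm_num [Complex.le_def])

lemma posSemidef_holevoK_sub_right : (holevoK ρ σ P N - (1/2 : ℂ) • σ).PosSemidef := by
  have heq : holevoK ρ σ P N - (1/2 : ℂ) • σ = (1/2 : ℂ) • ((ρ - σ) * P) := by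
    rw [holevoK, h.eq_one_sub]
    simp only [Matrix.mul_sub, Matrix.sub_mul, Matrix.mul_one]
    module
  obtain ⟨-, -, -, -, -, -, hpos, -⟩ := h
  rw [heq]
  exact hpos.smul (by norm_num [Complex.le_def])

lemma holevoK_eq {T : M4} (hT : T.PosSemidef) (hTT : T * T = (ρ - σ) * (ρ - σ)) :
    holevoK ρ σ P N = (1/4 : ℂ) • (ρ + σ) + (1/4 : ℂ) • T := by
  rw [← h.mul_sub_eq hT hTT, holevoK, h.eq_one_sub]
  simp only [Matrix.mul_sub, Matrix.sub_mul, Matrix.mul_one]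
  module

end IsSpectralPair

section PartialTranspose

@[simp] lemma PT_add (A B : M4) : PT (A + B) = PT A + PT B := rfl

@[simp] lemma PT_sub (A B : M4) : PT (A - B) = PT A - PT B := rfl

@[simp] lemma PT_smul (c : ℂ) (A : M4) : PT (c • A) = c • PT A := rfl

@[simp] lemma PT_PT (A : M4) : PT (PT A) = A := rfl

@[simp] lemma PT_one : PT 1 = 1 := by
  ext ⟨i, j⟩ ⟨k, l⟩
  by_cases hik : i = k <;> by_cases hjl : j = l <;> simp [PT, Matrix.one_apply, hik, hjl, eq_comm]

@[simp] lemma PT_kronecker (X Y : M2) : PT (X ⊗ₖ Y) = X ⊗ₖ Yᵀ := rfl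

lemma PT_sum {ι : Type*} (s : Finset ι) (A : ι → M4) : PT (∑ i ∈ s, A i) = ∑ i ∈ s, PT (A i) := by
  ext p q
  simp [PT, Matrix.sum_apply]

lemma trace_PT_mul (A B : M4) : (PT A * B).trace = (A * PT B).trace := by
  simp only [Matrix.trace, Matrix.diag, Matrix.mul_apply, PT, Fintype.sum_prod_type,
    Fin.sum_univ_two, Matrix.of_apply]
  ring

lemma trace_PT (A : M4) : (PT A).trace = A.trace := by
  simp [Matrix.trace, PT]

lemma exists_PT_decomposition {K ρ : M4} (hK : (K - (1/2 : ℂ) • ρ).PosSemidef) (hρ : PT ρ = ρ) :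
    ∃ P Q : M4, P.PosSemidef ∧ Q.PosSemidef ∧
      (1/4 : ℂ) • K + (1/4 : ℂ) • PT K - (1/4 : ℂ) • ρ = P + PT Q := by
  have hX := hK.smul (show (0 : ℂ) ≤ 1/4 by norm_num [Complex.le_def])
  refine ⟨_, _, hX, hX, ?_⟩
  simp only [PT_smul, PT_sub, hρ]
  module

end PartialTranspose

namespace Separable

variable {B : M4} (hB : Separable B)
include hB

lemma posSemidef : B.PosSemidef := by
  obtain ⟨k, X, Y, hXY, rfl⟩ := hB
  exact posSemidef_sum _ fun i _ => (hXY i).1.kronecker (hXY i).2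

lemma posSemidef_PT : (PT B).PosSemidef := by
  obtain ⟨k, X, Y, hXY, rfl⟩ := hB
  rw [PT_sum]
  exact posSemidef_sum _ fun i _ => (hXY i).1.kronecker (hXY i).2.transpose

lemma trace_mul_nonneg {E : M4} (hE : ∃ P Q : M4, P.PosSemidef ∧ Q.PosSemidef ∧ E = P + PT Q) :
    0 ≤ (E * B).trace := by
  obtain ⟨P, Q, hP, hQ, rfl⟩ := hE
  rw [Matrix.add_mul, Matrix.trace_add, trace_PT_mul]
  exact add_nonneg (hP.trace_mul_nonneg hB.posSemidef) (hQ.trace_mul_nonneg hB.posSemidef_PT)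

end Separable

section Example2

lemma inv_sqrt_two_mul_self : ((√2 : ℂ))⁻¹ * (√2 : ℂ)⁻¹ = 2⁻¹ := by
  rw [← mul_inv, ← Complex.ofReal_mul, Real.mul_self_sqrt zero_le_two]
  norm_num

lemma proj_ket0 : proj ket0 = !![1, 0; 0, 0] := by
  ext i j; fin_cases i <;> fin_cases j <;> simp [proj, outer, ket0]

lemma proj_ket1 : proj ket1 = !![0, 0; 0, 1] := by
  ext i j; fin_cases i <;> fin_cases j <;> simp [proj, outer, ket1]

lemma proj_ketP : proj ketP = !![1/2, 1/2; 1/2, 1/2] := by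
  ext i j; fin_cases i <;> fin_cases j <;> simp [proj, outer, ketP, inv_sqrt_two_mul_self]

lemma proj_ketM : proj ketM = !![1/2, -(1/2); -(1/2), 1/2] := by
  ext i j; fin_cases i <;> fin_cases j <;> simp [proj, outer, ketM, inv_sqrt_two_mul_self]

lemma PT_rt0p (γ : ℝ) : PT (rt0p γ) = rt0p γ := by
  simp [rt0p, proj_ket0, proj_ketP]

lemma PT_rt0m (γ : ℝ) : PT (rt0m γ) = rt0m γ := by
  simp [rt0m, proj_ket0, proj_ketP, proj_ketM]

lemma PT_rt1p (γ : ℝ) : PT (rt1p γ) = rt1p γ := by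
  simp [rt1p, proj_ket0, proj_ket1, proj_ketP]

lemma PT_rt1m (γ : ℝ) : PT (rt1m γ) = rt1m γ := by
  simp [rt1m, proj_ket0, proj_ket1, proj_ketP, proj_ketM]

lemma rt0p_add_rt1m (γ : ℝ) : rt0p γ + rt1m γ = rt1p γ + rt0m γ := by
  simp only [rt0p, rt1m, rt1p, rt0m]
  abel

lemma trace_rt0p_add_rt1m {γ : ℝ} (hγ : 1 + γ ≠ 0) : (rt0p γ + rt1m γ).trace = 2 := by
  have : (1 + γ : ℂ) ≠ 0 := by exact_mod_cast hγ
  simp only [rt0p, rt1m, proj_ket0, proj_ket1, proj_ketP, proj_ketM, trace_add, trace_smul,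
    trace_kronecker, trace_fin_two_of, smul_eq_mul]
  push_cast
  field_simp
  ring

def stateDiff (α β : ℝ) : M4 :=
  (α : ℂ) • (proj ket0 ⊗ₖ !![1, 0; 0, -1]) + (β : ℂ) • (proj ketP ⊗ₖ σ1)

lemma rt0p_sub_rt1m (γ : ℝ) :
    rt0p γ - rt1m γ = stateDiff (γ / (1 + γ)) (1 / (1 + γ)) := by
  simp only [rt0p, rt1m, stateDiff, proj_ket0, proj_ket1, proj_ketP, proj_ketM, σ1]
  ext ⟨i, j⟩ ⟨k, l⟩
  fin_cases i <;> fin_cases j <;> fin_cases k <;> fin_cases l <;> simp <;> ring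

lemma rt1p_sub_rt0m (γ : ℝ) :
    rt1p γ - rt0m γ = stateDiff (-(γ / (1 + γ))) (1 / (1 + γ)) := by
  simp only [rt1p, rt0m, stateDiff, proj_ket0, proj_ket1, proj_ketP, proj_ketM, σ1]
  ext ⟨i, j⟩ ⟨k, l⟩
  fin_cases i <;> fin_cases j <;> fin_cases k <;> fin_cases l <;> simp <;> ring

section StateDiff

variable (α β : ℝ)

lemma conjTranspose_stateDiff : (stateDiff α β)ᴴ = stateDiff α β := by
  simp only [stateDiff, proj_ket0, proj_ketP, σ1]
  ext ⟨i, j⟩ ⟨k, l⟩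
  fin_cases i <;> fin_cases j <;> fin_cases k <;> fin_cases l <;> simp

lemma stateDiff_sq_sq :
    stateDiff α β * stateDiff α β * (stateDiff α β * stateDiff α β) =
      ((α ^ 2 + β ^ 2 : ℝ) : ℂ) • (stateDiff α β * stateDiff α β)
        - ((α * β / 2 : ℝ) : ℂ) ^ 2 • 1 := by
  simp only [stateDiff, proj_ket0, proj_ketP, σ1]
  ext ⟨i, j⟩ ⟨k, l⟩
  fin_cases i <;> fin_cases j <;> fin_cases k <;> fin_cases l <;>
    simp [Matrix.mul_apply, Fintype.sum_prod_type] <;> ring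

lemma trace_stateDiff_sq :
    (stateDiff α β * stateDiff α β).trace = 2 * ((α ^ 2 + β ^ 2 : ℝ) : ℂ) := by
  simp only [stateDiff, proj_ket0, proj_ketP, σ1, trace, diag_apply, Matrix.mul_apply,
    Matrix.add_apply, Matrix.smul_apply, kroneckerMap_apply, of_apply, cons_val', cons_val_fin_one,
    Fintype.sum_prod_type, Fin.sum_univ_two, Fin.isValue, cons_val_zero, cons_val_one]
  push_cast
  ring

lemma PT_stateDiff_sq :
    PT (stateDiff α β * stateDiff α β) = stateDiff (-α) β * stateDiff (-α) β := by
  simp only [stateDiff, proj_ket0, proj_ketP, σ1]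
  ext ⟨i, j⟩ ⟨k, l⟩
  fin_cases i <;> fin_cases j <;> fin_cases k <;> fin_cases l <;>
    simp [PT, Matrix.mul_apply, Fintype.sum_prod_type] <;> ring

def absStateDiff : M4 :=
  sqrtOfQuadratic (α ^ 2 + β ^ 2) (|α * β| / 2) (stateDiff α β * stateDiff α β)

lemma posSemidef_absStateDiff : (absStateDiff α β).PosSemidef := by
  refine posSemidef_sqrtOfQuadratic ?_ _ (by positivity)
  simpa [conjTranspose_stateDiff] using posSemidef_conjTranspose_mul_self (stateDiff α β)

lemma absStateDiff_mul_self (hβ : β ≠ 0) :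
    absStateDiff α β * absStateDiff α β = stateDiff α β * stateDiff α β := by
  have ht : ((|α * β| / 2 : ℝ) : ℂ) ^ 2 = ((α * β / 2 : ℝ) : ℂ) ^ 2 := by
    rw [← Complex.ofReal_pow, ← Complex.ofReal_pow, div_pow, div_pow, sq_abs]
  refine sqrtOfQuadratic_mul_self (by positivity) ?_
  rw [stateDiff_sq_sq, ht]

lemma PT_absStateDiff : PT (absStateDiff α β) = absStateDiff (-α) β := by
  simp [absStateDiff, sqrtOfQuadratic, PT_stateDiff_sq]

lemma trace_absStateDiff :
    (absStateDiff α β).trace = 2 * √(α ^ 2 + β ^ 2 + |α * β|) := by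
  have hx : ((2 * ((α ^ 2 + β ^ 2 + |α * β|) / √(α ^ 2 + β ^ 2 + |α * β|)) : ℝ) : ℂ)
      = ((2 * √(α ^ 2 + β ^ 2 + |α * β|) : ℝ) : ℂ) := by rw [Real.div_sqrt]
  rw [absStateDiff, trace_sqrtOfQuadratic, trace_stateDiff_sq, mul_div_cancel₀ _ two_ne_zero]
  simp only [Fintype.card_prod, Fintype.card_fin]
  push_cast at hx ⊢
  linear_combination hx

end StateDiff

lemma sqrt_weights {γ : ℝ} (hγ : 0 ≤ γ) :
    √((γ / (1 + γ)) ^ 2 + (1 / (1 + γ)) ^ 2 + |γ / (1 + γ) * (1 / (1 + γ))|)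
      = √(1 + γ + γ ^ 2) / (1 + γ) := by
  have h1γ : 0 < 1 + γ := by linarith
  rw [abs_of_nonneg (by positivity), show (γ / (1 + γ)) ^ 2 + (1 / (1 + γ)) ^ 2
      + γ / (1 + γ) * (1 / (1 + γ)) = (1 + γ + γ ^ 2) / (1 + γ) ^ 2 by field_simp; ring,
    Real.sqrt_div' _ (by positivity), Real.sqrt_sq h1γ.le]

end Example2

/-- H̃ = (1/4)K₀ + (1/4)K₁ satisfies H̃ − (1/4)ρ̃ω = PSD + PT(PSD) for each ω,
hence Tr((H̃ − (1/4)ρ̃ω)B) ≥ 0 for all separable PSD B, and 2Tr H̃ = (1/2)(1+√(1+γ+γ²)/(1+γ)). -/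
theorem stmt_19 (γ : ℝ) (hγ : 2 ≤ γ)
    (P0p P1m P1p P0m : M4)
    (h1 : IsSpectralPair (rt0p γ - rt1m γ) P0p P1m)
    (h2 : IsSpectralPair (rt1p γ - rt0m γ) P1p P0m) :
    let K0 : M4 := (1/2 : ℂ) • (rt0p γ * P0p) + (1/2 : ℂ) • (rt1m γ * P1m)
    let K1 : M4 := (1/2 : ℂ) • (rt1p γ * P1p) + (1/2 : ℂ) • (rt0m γ * P0m)
    let Ht : M4 := (1/4 : ℂ) • K0 + (1/4 : ℂ) • K1
    let rts : Fin 4 → M4 := ![rt0p γ, rt1p γ, rt0m γ, rt1m γ]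
    (∀ i : Fin 4,
        (∃ P Q : M4, P.PosSemidef ∧ Q.PosSemidef ∧
            Ht - (1/4 : ℂ) • rts i = P + PT Q)
        ∧ ∀ B : M4, Separable B → 0 ≤ ((Ht - (1/4 : ℂ) • rts i) * B).trace)
    ∧ 2 * Ht.trace = (((1/2) * (1 + Real.sqrt (1 + γ + γ^2) / (1 + γ)) : ℝ) : ℂ) := by
  intro K0 K1 Ht rts
  have hγ1 : 1 + γ ≠ 0 := by positivity
  have hb : 1 / (1 + γ) ≠ 0 := by positivity
  have hK0 : K0 = (1/4 : ℂ) • (rt0p γ + rt1m γ)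
      + (1/4 : ℂ) • absStateDiff (γ / (1 + γ)) (1 / (1 + γ)) :=
    h1.holevoK_eq (posSemidef_absStateDiff _ _)
      (by rw [rt0p_sub_rt1m, absStateDiff_mul_self _ _ hb])
  have hK1 : K1 = (1/4 : ℂ) • (rt1p γ + rt0m γ)
      + (1/4 : ℂ) • absStateDiff (-(γ / (1 + γ))) (1 / (1 + γ)) :=
    h2.holevoK_eq (posSemidef_absStateDiff _ _)
      (by rw [rt1p_sub_rt0m, absStateDiff_mul_self _ _ hb])
  have hPT : PT K0 = K1 := by
    rw [hK0, hK1, ← rt0p_add_rt1m]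
    simp [PT_rt0p, PT_rt1m, PT_absStateDiff]
  have hHt0 : Ht = (1/4 : ℂ) • K0 + (1/4 : ℂ) • PT K0 := by rw [hPT]
  have hHt1 : Ht = (1/4 : ℂ) • K1 + (1/4 : ℂ) • PT K1 := by rw [hHt0, ← hPT, PT_PT, add_comm]
  have hdec : ∀ i, ∃ P Q : M4, P.PosSemidef ∧ Q.PosSemidef ∧
      Ht - (1/4 : ℂ) • rts i = P + PT Q := by
    intro i
    fin_cases i
    · rw [hHt0]; exact exists_PT_decomposition h1.posSemidef_holevoK_sub_left (PT_rt0p γ)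
    · rw [hHt1]; exact exists_PT_decomposition h2.posSemidef_holevoK_sub_left (PT_rt1p γ)
    · rw [hHt1]; exact exists_PT_decomposition h2.posSemidef_holevoK_sub_right (PT_rt0m γ)
    · rw [hHt0]; exact exists_PT_decomposition h1.posSemidef_holevoK_sub_right (PT_rt1m γ)
  refine ⟨fun i => ⟨hdec i, fun B hB => hB.trace_mul_nonneg (hdec i)⟩, ?_⟩
  rw [hHt0, Matrix.trace_add, Matrix.trace_smul, Matrix.trace_smul, trace_PT, hK0,
    Matrix.trace_add, Matrix.trace_smul, Matrix.trace_smul, trace_rt0p_add_rt1m hγ1,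
    trace_absStateDiff, sqrt_weights (by linarith)]
  push_cast
  ring
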